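/- Consider the ternary QUANT iteration with unit teacher vector w* ∈ ℝⁿ and suppose w* ∉ Q₃. Then: (i) any subsequential limit of the normalized iterates lies in the closure of Cone(w*); precisely, if (t_k) is strictly increasing, y^{t_k} ≠ 0 for all k, and y^{t_k}/‖y^{t_k}‖ converges to some u ∈ ℝⁿ, then u belongs to the closure of Cone(w*); (ii) if moreover Cone(w*) is regular (all coordinates of w* nonzero and of pairwise distinct absolute values), then y^t ∈ Cone(w*) for all but finitely many t. -/

import Mathlib

open Real Filter Set

/-- Euclidean norm of a vector in `Fin k → ℝ`. -/
noncomputable def euclNorm {k : ℕ} (x : Fin k → ℝ) : ℝ := Real.sqrt (∑ i, x i ^ 2)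

/-- ℓ¹ norm of a vector in `Fin k → ℝ`. -/
noncomputable def l1Norm {k : ℕ} (x : Fin k → ℝ) : ℝ := ∑ i, |x i|

/-- `s` is a ternary sign vector, i.e. `s ∈ {−1,0,1}ⁿ`. -/
def IsTern {k : ℕ} (s : Fin k → ℝ) : Prop := ∀ i, s i = -1 ∨ s i = 0 ∨ s i = 1

/-- `x` belongs to the ternary quantized set `Q₃ = {δ·s : δ ≥ 0, s ∈ {−1,0,1}ⁿ}`. -/
def InQ3 {k : ℕ} (x : Fin k → ℝ) : Prop :=
  ∃ δ : ℝ, 0 ≤ δ ∧ ∃ s : Fin k → ℝ, IsTern s ∧ x = δ • s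

/-- `u` is a normalized ternary projection of `y`: `u = s/‖s‖` for a nonzero
ternary sign vector `s` maximizing `⟨y, s'⟩/‖s'‖` over nonzero ternary `s'`. -/
noncomputable def IsNTernProj {k : ℕ} (y u : Fin k → ℝ) : Prop :=
  ∃ s : Fin k → ℝ, IsTern s ∧ s ≠ 0 ∧
    (∀ s' : Fin k → ℝ, IsTern s' → s' ≠ 0 →
      (∑ i, y i * s' i) / euclNorm s' ≤ (∑ i, y i * s i) / euclNorm s) ∧
    u = fun i => s i / euclNorm s

/-- The cone of `x`: vectors in the orthant of `x` whose coordinates are ordered in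
absolute value in the same way as those of `x`. -/
def ConeOf {k : ℕ} (x : Fin k → ℝ) : Set (Fin k → ℝ) :=
  {y | (∀ i, Real.sign (y i) = Real.sign (x i)) ∧
       ∀ i j, Real.sign (|y j| - |y i|) = Real.sign (|x j| - |x i|)}

/-! Write `G = ⟨y, w⟩` for the normalized ternary projection `w = s / ‖s‖` of `y`, with
`‖s‖² = q`. Comparing `s` with the ternary vectors obtained by changing one coordinate shows
that coordinates of `y` in the support of `s` have size at least `(√q - √(q-1)) G`, those outside
at most `(√(q+1) - √q) G`, and strict concavity of `√` separates the two thresholds uniformly in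
`q ≤ n`. Hence for every signed difference `ℓ x = b x_j - a x_i` with `a, b ∈ {-1, 0, 1}`,
`ℓ w > 0` forces `ℓ y ≥ ε G`.

Since `w* ∉ Q₃`, the correlation `⟨w*, w⟩` stays below `1 - γ`, so `⟨y, w*⟩`, and with it `G` and
`‖y‖`, grow like `∑ η`. Each `ℓ y` moves by `η c (ℓ w* - ℓ w)`, and `ℓ w > 0` can only push it down
while it is above `ε G`; so `ℓ y → ∞` when `ℓ w* > 0` and `ℓ y` stays bounded when `ℓ w* = 0`.
The signs of these differences are exactly what `Cone(w*)` records: for a limit `u` as in (i)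
they put `u + τ w*` in `Cone(w*)` for every `τ > 0`, and in the regular case they hold for `y^t`
from some time on. -/

open Topology

section

variable {k : ℕ}

lemma euclNorm_nonneg (x : Fin k → ℝ) : 0 ≤ euclNorm x := Real.sqrt_nonneg _

lemma euclNorm_eq_norm (x : Fin k → ℝ) : euclNorm x = ‖WithLp.toLp 2 x‖ := by
  simp [euclNorm, EuclideanSpace.norm_eq]

lemma dotProduct_eq_inner (x y : Fin k → ℝ) :
    x ⬝ᵥ y = inner ℝ (WithLp.toLp 2 x) (WithLp.toLp 2 y) := by
  simp [EuclideanSpace.inner_toLp_toLp, dotProduct_comm]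

lemma dotProduct_le_euclNorm_mul (x y : Fin k → ℝ) : x ⬝ᵥ y ≤ euclNorm x * euclNorm y := by
  simpa only [dotProduct_eq_inner, euclNorm_eq_norm] using real_inner_le_norm _ _

lemma abs_le_euclNorm (x : Fin k → ℝ) (i : Fin k) : |x i| ≤ euclNorm x := by
  simpa [euclNorm_eq_norm] using PiLp.norm_apply_le (WithLp.toLp 2 x) i

lemma euclNorm_pos {x : Fin k → ℝ} (hx : x ≠ 0) : 0 < euclNorm x := by
  simpa [euclNorm_eq_norm] using hx

lemma Real.sign_eq_coe_sign (r : ℝ) : Real.sign r = (SignType.sign r : ℝ) := by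
  rcases lt_trichotomy r 0 with h | rfl | h
  · simp [Real.sign_of_neg h, _root_.sign_neg h]
  · simp [Real.sign_zero]
  · simp [Real.sign_of_pos h, _root_.sign_pos h]

lemma abs_sub_le_max_of_mul_nonneg {u δ : ℝ} (h : 0 ≤ u * δ) : |u - δ| ≤ max |u| |δ| := by
  rcases mul_nonneg_iff.1 h with ⟨hu, hδ⟩ | ⟨hu, hδ⟩
  · exact abs_sub_le_of_nonneg_of_le hu (le_max_of_le_left (le_abs_self u)) hδ
      (le_max_of_le_right (le_abs_self δ))
  · have := abs_sub_le_of_nonneg_of_le (neg_nonneg.2 hu) (le_max_of_le_left (neg_le_abs u))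
      (neg_nonneg.2 hδ) (le_max_of_le_right (neg_le_abs δ))
    rwa [neg_sub_neg, abs_sub_comm] at this

lemma exists_mul_eq_abs (r : ℝ) : ∃ b : ℝ, (b = -1 ∨ b = 0 ∨ b = 1) ∧ b ^ 2 = 1 ∧ r * b = |r| := by
  rcases le_total 0 r with hr | hr
  · exact ⟨1, by norm_num, by norm_num, by rw [mul_one, abs_of_nonneg hr]⟩
  · exact ⟨-1, by norm_num, by norm_num, by rw [mul_neg_one, abs_of_nonpos hr]⟩

lemma Set.Finite.exists_lt_forall_le {α : Type*} {S : Set α} (hS : S.Finite) {f : α → ℝ}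
    {C : ℝ} (hf : ∀ x ∈ S, f x < C) : ∃ C' < C, ∀ x ∈ S, f x ≤ C' := by
  rcases S.eq_empty_or_nonempty with rfl | hne
  · exact ⟨C - 1, by linarith, by simp⟩
  · obtain ⟨x₀, hx₀, hmax⟩ := S.exists_max_image f hS hne
    exact ⟨f x₀, hf x₀ hx₀, hmax⟩

lemma sqrt_sub_one_add_sqrt_add_one_lt {q : ℝ} (hq : 1 ≤ q) :
    √(q - 1) + √(q + 1) < 2 * √q := by
  have hprod : √(q - 1) * √(q + 1) < q := by
    rw [← Real.sqrt_mul (by linarith), Real.sqrt_lt' (by linarith)]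
    nlinarith
  have hsq : (√(q - 1) + √(q + 1)) ^ 2 < (2 * √q) ^ 2 := by
    rw [add_sq, mul_pow, Real.sq_sqrt (by linarith), Real.sq_sqrt (by linarith),
      Real.sq_sqrt (by linarith)]
    nlinarith
  exact lt_of_pow_lt_pow_left₀ 2 (by positivity) hsq

lemma exists_pos_le_sqrt_gap (n : ℕ) :
    ∃ ε > 0, ∀ q : ℕ, 1 ≤ q → q ≤ n → ε ≤ 2 * √q - √(q - 1) - √(q + 1) := by
  obtain ⟨C, hC, hle⟩ := (Set.finite_Icc 1 n).exists_lt_forall_le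
    (f := fun q : ℕ => √(q - 1) + √(q + 1) - 2 * √q) (C := 0) fun q hq => by
      have := sqrt_sub_one_add_sqrt_add_one_lt (q := q) (by exact_mod_cast hq.1)
      linarith
  exact ⟨-C, by linarith, fun q h1 h2 => by linarith [hle q ⟨h1, h2⟩]⟩

lemma dotProduct_update (y s : Fin k → ℝ) (i : Fin k) (b : ℝ) :
    y ⬝ᵥ Function.update s i b = y ⬝ᵥ s + y i * (b - s i) := by
  rw [Pi.update_eq_sub_add_single, dotProduct_add, dotProduct_sub]
  simp only [dotProduct_single]
  ring

lemma sum_sq_update (s : Fin k → ℝ) (i : Fin k) (b : ℝ) :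
    ∑ j, Function.update s i b j ^ 2 = ∑ j, s j ^ 2 + (b ^ 2 - s i ^ 2) := by
  have h := Finset.sum_update_of_mem (Finset.mem_univ i) (fun j => s j ^ 2) (b ^ 2)
  rw [Finset.sum_eq_add_sum_sdiff_singleton_of_mem (Finset.mem_univ i) (fun j => s j ^ 2)]
  simp only [← Function.apply_update (fun _ x => x ^ 2)] at h
  rw [h]
  ring

lemma isTern_zero : IsTern (0 : Fin k → ℝ) := fun _ => Or.inr (Or.inl rfl)

lemma IsTern.update {s : Fin k → ℝ} (hs : IsTern s) (i : Fin k) {b : ℝ}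
    (hb : b = -1 ∨ b = 0 ∨ b = 1) : IsTern (Function.update s i b) := by
  intro j
  rcases eq_or_ne j i with rfl | hj
  · simpa using hb
  · simpa [hj] using hs j

lemma finite_setOf_isTern : {s : Fin k → ℝ | IsTern s}.Finite :=
  (Set.Finite.pi (t := fun _ => ({-1, 0, 1} : Set ℝ)) fun _ => by simp).subset
    fun s hs i _ => by simpa using hs i

lemma IsTern.exists_sum_sq_eq {s : Fin k → ℝ} (hs : IsTern s) (h0 : s ≠ 0) :
    ∃ q : ℕ, 1 ≤ q ∧ q ≤ k ∧ ∑ i, s i ^ 2 = q := by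
  obtain ⟨i, hi⟩ := Function.ne_iff.1 h0
  refine ⟨(Finset.univ.filter fun j => s j ≠ 0).card, Finset.card_pos.2 ⟨i, by simpa using hi⟩,
    (Finset.card_le_univ _).trans_eq (Fintype.card_fin k), ?_⟩
  rw [Finset.card_filter, Nat.cast_sum]
  refine Finset.sum_congr rfl fun j _ => ?_
  rcases hs j with h | h | h <;> simp [h]

lemma dotProduct_div_euclNorm_lt_one {w s : Fin k → ℝ} (hw : euclNorm w = 1) (hQ : ¬ InQ3 w)
    (hs : IsTern s) (h0 : s ≠ 0) : w ⬝ᵥ s / euclNorm s < 1 := by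
  rw [div_lt_one (euclNorm_pos h0)]
  refine (dotProduct_le_euclNorm_mul w s).trans_eq (by rw [hw, one_mul]) |>.lt_of_ne fun heq => ?_
  rw [dotProduct_eq_inner, euclNorm_eq_norm] at heq
  rw [euclNorm_eq_norm] at hw
  have h := inner_eq_norm_mul_iff_real.1 (by rw [heq, hw, one_mul])
  rw [hw, one_smul] at h
  have hN := euclNorm_pos h0
  refine hQ ⟨(euclNorm s)⁻¹, (inv_pos.2 hN).le, s, hs, ?_⟩
  have h' : euclNorm s • w = s := by
    simpa [euclNorm_eq_norm] using congrArg WithLp.ofLp h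
  exact (eq_inv_smul_iff₀ hN.ne').2 h'

lemma exists_pos_dotProduct_le_of_not_inQ3 {w : Fin k → ℝ} (hw : euclNorm w = 1)
    (hQ : ¬ InQ3 w) : ∃ γ > 0, ∀ y u : Fin k → ℝ, IsNTernProj y u → w ⬝ᵥ u ≤ 1 - γ := by
  have hfin : {s : Fin k → ℝ | IsTern s ∧ s ≠ 0}.Finite :=
    finite_setOf_isTern.subset fun _ hs => hs.1
  obtain ⟨C, hC1, hC⟩ :=
    hfin.exists_lt_forall_le fun s hs => dotProduct_div_euclNorm_lt_one hw hQ hs.1 hs.2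
  refine ⟨1 - C, by linarith, fun y u ⟨s, hs, hs0, _, hu⟩ => ?_⟩
  have : w ⬝ᵥ u = w ⬝ᵥ s / euclNorm s := by
    simp [hu, dotProduct, Finset.sum_div, mul_div_assoc]
  linarith [hC s ⟨hs, hs0⟩]

lemma IsNTernProj.exists_maximizer {y u : Fin k → ℝ} (h : IsNTernProj y u) :
    ∃ s, IsTern s ∧ s ≠ 0 ∧ u = (euclNorm s)⁻¹ • s ∧
      ∀ s', IsTern s' → y ⬝ᵥ s' ≤ (y ⬝ᵥ u) * euclNorm s' := by
  obtain ⟨s, hs, hs0, hmax, rfl⟩ := h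
  have hu : (fun i => s i / euclNorm s) = (euclNorm s)⁻¹ • s := by
    ext i; simp [div_eq_inv_mul]
  refine ⟨s, hs, hs0, hu, fun s' hs' => ?_⟩
  rcases eq_or_ne s' 0 with rfl | hs'0
  · simp [euclNorm]
  · rw [hu, dotProduct_smul, smul_eq_mul, inv_mul_eq_div, ← div_le_iff₀ (euclNorm_pos hs'0)]
    exact hmax s' hs' hs'0

def TernBound (A B r z : ℝ) : Prop :=
  (r = 1 ∧ A ≤ z) ∨ (r = 0 ∧ |z| ≤ B) ∨ (r = -1 ∧ z ≤ -A)

namespace TernBound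

variable {A B r z : ℝ}

lemma neg (h : TernBound A B r z) : TernBound A B (-r) (-z) := by
  rcases h with ⟨rfl, h⟩ | ⟨rfl, h⟩ | ⟨rfl, h⟩
  · exact Or.inr (Or.inr ⟨rfl, neg_le_neg h⟩)
  · exact Or.inr (Or.inl ⟨neg_zero, by rwa [abs_neg]⟩)
  · exact Or.inl ⟨neg_neg 1, le_neg_of_le_neg h⟩

lemma signType_mul (h : TernBound A B r z) (hB : 0 ≤ B) (c : SignType) :
    TernBound A B (c * r) (c * z) := by
  cases c
  · exact Or.inr (Or.inl ⟨by simp, by simpa using hB⟩)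
  · simpa using h.neg
  · simpa using h

lemma sub_le {ri zi rj zj : ℝ} (hi : TernBound A B ri zi) (hj : TernBound A B rj zj)
    (hlt : ri < rj) (hAB : 0 ≤ A + B) : A - B ≤ zj - zi := by
  rcases hi with ⟨rfl, hi⟩ | ⟨rfl, hi⟩ | ⟨rfl, hi⟩ <;>
    rcases hj with ⟨rfl, hj⟩ | ⟨rfl, hj⟩ | ⟨rfl, hj⟩ <;> norm_num at hlt <;>
    linarith [neg_abs_le zj, le_abs_self zi]

end TernBound

section Maximizer

variable {y s : Fin k → ℝ} {G : ℝ}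

lemma dotProduct_update_le (hmax : ∀ s', IsTern s' → y ⬝ᵥ s' ≤ G * euclNorm s')
    (hs : IsTern s) (i : Fin k) {b : ℝ} (hb : b = -1 ∨ b = 0 ∨ b = 1) :
    y ⬝ᵥ s + y i * (b - s i) ≤ G * √(∑ j, s j ^ 2 + (b ^ 2 - s i ^ 2)) := by
  simpa only [dotProduct_update, euclNorm, sum_sq_update] using hmax _ (hs.update i hb)

lemma abs_le_of_dotProduct_isTern_le (hmax : ∀ s', IsTern s' → y ⬝ᵥ s' ≤ G * euclNorm s')
    (i : Fin k) : |y i| ≤ G := by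
  obtain ⟨b, hb, hb2, hyb⟩ := exists_mul_eq_abs (y i)
  simpa [hyb, hb2] using dotProduct_update_le hmax isTern_zero i hb

lemma ternBound_of_maximizer {q : ℝ}
    (hmax : ∀ s', IsTern s' → y ⬝ᵥ s' ≤ G * euclNorm s') (hs : IsTern s)
    (hq : ∑ j, s j ^ 2 = q) (hG : y ⬝ᵥ s = G * √q) (i : Fin k) :
    TernBound (G * (√q - √(q - 1))) (G * (√(q + 1) - √q)) (s i) (y i) := by
  have hupd := fun (b : ℝ) hb => dotProduct_update_le hmax hs i (b := b) hb
  simp only [hq, hG] at hupd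
  rcases hs i with h | h | h
  · have := hupd 0 (by simp)
    rw [h, show q + ((0 : ℝ) ^ 2 - (-1) ^ 2) = q - 1 by ring] at this
    exact Or.inr (Or.inr ⟨h, by linarith⟩)
  · obtain ⟨b, hb, hb2, hyb⟩ := exists_mul_eq_abs (y i)
    have := hupd b hb
    rw [h, sub_zero, hyb, hb2, sq, zero_mul, sub_zero] at this
    exact Or.inr (Or.inl ⟨h, by linarith⟩)
  · have := hupd 0 (by simp)
    rw [h, show q + ((0 : ℝ) ^ 2 - 1 ^ 2) = q - 1 by ring] at this
    exact Or.inl ⟨h, by linarith⟩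

end Maximizer

def pairDiff (a b : SignType) (i j : Fin k) : (Fin k → ℝ) →ₗ[ℝ] ℝ :=
  (b : ℝ) • LinearMap.proj j - (a : ℝ) • LinearMap.proj i

lemma pairDiff_apply (a b : SignType) (i j : Fin k) (x : Fin k → ℝ) :
    pairDiff a b i j x = b * x j - a * x i := rfl

lemma pairDiff_neg_neg (a b : SignType) (i j : Fin k) (x : Fin k → ℝ) :
    pairDiff (-a) (-b) i j x = -pairDiff a b i j x := by
  simp only [pairDiff_apply, SignType.coe_neg]
  ring

lemma abs_pairDiff_le {x : Fin k → ℝ} (hx : ∀ l, |x l| ≤ 1) (a b : SignType) (i j : Fin k) :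
    |pairDiff a b i j x| ≤ 2 := by
  have hc : ∀ (c : SignType) l, |(c : ℝ) * x l| ≤ 1 := fun c l => by
    cases c <;> simp [hx l]
  rw [pairDiff_apply]
  linarith [abs_sub (b * x j) (a * x i), hc b j, hc a i]

lemma IsNTernProj.abs_le_one {y u : Fin k → ℝ} (h : IsNTernProj y u) (l : Fin k) : |u l| ≤ 1 := by
  obtain ⟨s, -, hs0, rfl, -⟩ := h.exists_maximizer
  have hN := euclNorm_pos hs0
  rw [Pi.smul_apply, smul_eq_mul, abs_mul, abs_inv, abs_of_pos hN, inv_mul_le_one₀ hN]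
  exact abs_le_euclNorm s l

lemma IsNTernProj.abs_le_dotProduct {y u : Fin k → ℝ} (h : IsNTernProj y u) (l : Fin k) :
    |y l| ≤ y ⬝ᵥ u := by
  obtain ⟨s, -, -, -, hmax⟩ := h.exists_maximizer
  exact abs_le_of_dotProduct_isTern_le hmax l

lemma IsNTernProj.dotProduct_nonneg {y u : Fin k → ℝ} (h : IsNTernProj y u) : 0 ≤ y ⬝ᵥ u := by
  obtain ⟨s, -, hs0, -, -⟩ := h.exists_maximizer
  obtain ⟨l, -⟩ := Function.ne_iff.1 hs0
  exact (abs_nonneg _).trans (h.abs_le_dotProduct l)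

lemma IsNTernProj.mul_le_pairDiff {ε : ℝ}
    (hε : ∀ q : ℕ, 1 ≤ q → q ≤ k → ε ≤ 2 * √q - √(q - 1) - √(q + 1))
    {y u : Fin k → ℝ} (h : IsNTernProj y u) {a b : SignType} {i j : Fin k}
    (hpos : 0 < pairDiff a b i j u) : ε * (y ⬝ᵥ u) ≤ pairDiff a b i j y := by
  have hG0 := h.dotProduct_nonneg
  obtain ⟨s, hs, hs0, rfl, hmax⟩ := h.exists_maximizer
  set G := y ⬝ᵥ ((euclNorm s)⁻¹ • s) with hGdef
  obtain ⟨q, hq1, hqk, hq⟩ := hs.exists_sum_sq_eq hs0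
  have hN : euclNorm s = √q := by rw [euclNorm, hq]
  have hG : y ⬝ᵥ s = G * √q := by
    rw [← hN, hGdef, dotProduct_smul, smul_eq_mul]
    field_simp [(euclNorm_pos hs0).ne']
  have hbound := ternBound_of_maximizer hmax hs hq hG
  have hlt : a * s i < b * s j := by
    rw [map_smul, smul_eq_mul, pairDiff_apply] at hpos
    exact sub_pos.1 (pos_of_mul_pos_right hpos (inv_pos.2 (euclNorm_pos hs0)).le)
  have hq1' : (1 : ℝ) ≤ q := by exact_mod_cast hq1
  have hB : 0 ≤ G * (√(q + 1) - √q) :=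
    mul_nonneg hG0 (sub_nonneg.2 (Real.sqrt_le_sqrt (by linarith)))
  have hA : 0 ≤ G * (√q - √(q - 1)) :=
    mul_nonneg hG0 (sub_nonneg.2 (Real.sqrt_le_sqrt (by linarith)))
  have hsep := ((hbound i).signType_mul hB a).sub_le ((hbound j).signType_mul hB b) hlt
    (add_nonneg hA hB)
  rw [pairDiff_apply]
  nlinarith [hε q hq1 hqk]

section Drift

variable {η d : ℕ → ℝ}

lemma exists_le_of_drift {α M : ℝ} {T₀ : ℕ} (hα : 0 < α)
    (hη : Tendsto (fun T => ∑ t ∈ Finset.range T, η t) atTop atTop)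
    (hstep : ∀ t ≥ T₀, d t < M → d t + α * η t ≤ d (t + 1)) : ∃ t ≥ T₀, M ≤ d t := by
  by_contra! hlt
  have hgrow : ∀ t ≥ T₀,
      d T₀ + α * (∑ r ∈ Finset.range t, η r - ∑ r ∈ Finset.range T₀, η r) ≤ d t := by
    intro t ht
    induction t, ht using Nat.le_induction with
    | base => simp
    | succ t ht ih =>
      rw [Finset.sum_range_succ]
      linarith [hstep t ht (hlt t ht)]
  obtain ⟨t, hbig, ht⟩ := ((hη.eventually_ge_atTop
    (∑ r ∈ Finset.range T₀, η r + (M - d T₀) / α)).and (eventually_ge_atTop T₀)).exists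
  have hreach : M - d T₀ ≤ α * (∑ r ∈ Finset.range t, η r - ∑ r ∈ Finset.range T₀, η r) := by
    rw [← div_le_iff₀' hα]
    linarith
  linarith [hgrow t ht, hlt t ht]

lemma tendsto_atTop_of_drift {p g : ℕ → ℝ} {Δ β ηbar : ℝ} (hΔ : 0 < Δ) (hβ : 0 ≤ β)
    (hη0 : ∀ t, 0 < η t) (hηb : ∀ t, η t ≤ ηbar)
    (hη : Tendsto (fun T => ∑ t ∈ Finset.range T, η t) atTop atTop)
    (hg : Tendsto g atTop atTop) (hstep : ∀ t, d (t + 1) = d t + η t * (Δ - p t))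
    (hp : ∀ t, p t ≤ β) (hpg : ∀ t, 0 < p t → g t ≤ d t) : Tendsto d atTop atTop := by
  have hηβ : 0 ≤ ηbar * β := mul_nonneg ((hη0 0).le.trans (hηb 0)) hβ
  have hup : ∀ t, p t ≤ 0 → d t + Δ * η t ≤ d (t + 1) := fun t hp0 => by
    rw [hstep]
    nlinarith [hη0 t]
  have hdown : ∀ t, d t - ηbar * β ≤ d (t + 1) := fun t => by
    rw [hstep]
    nlinarith [hη0 t, hηb t, hp t]
  refine tendsto_atTop.2 fun M => ?_
  obtain ⟨T₀, hT₀⟩ := eventually_atTop.1 (hg.eventually_ge_atTop (M + ηbar * β))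
  obtain ⟨T₁, hT₁, hM⟩ := exists_le_of_drift (T₀ := T₀) (M := M) hΔ hη fun t ht hdt =>
    hup t (not_lt.1 fun hp0 => by linarith [hpg t hp0, hT₀ t ht])
  refine eventually_atTop.2 ⟨T₁, fun t ht => ?_⟩
  induction t, ht using Nat.le_induction with
  | base => exact hM
  | succ t ht ih =>
    rcases le_or_gt (p t) 0 with hp0 | hp0
    · nlinarith [hup t hp0, hη0 t]
    · linarith [hdown t, hpg t hp0, hT₀ t (hT₁.trans ht)]

lemma abs_le_max_of_restoring {p : ℕ → ℝ} {β ηbar : ℝ} (hη0 : ∀ t, 0 < η t)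
    (hηb : ∀ t, η t ≤ ηbar) (hstep : ∀ t, d (t + 1) = d t - η t * p t)
    (hp : ∀ t, |p t| ≤ β) (hdp : ∀ t, 0 ≤ d t * p t) (t : ℕ) :
    |d t| ≤ max |d 0| (ηbar * β) := by
  induction t with
  | zero => exact le_max_left _ _
  | succ t ih =>
    have hmul : 0 ≤ d t * (η t * p t) := by
      rw [mul_left_comm]
      exact mul_nonneg (hη0 t).le (hdp t)
    have hmove : |η t * p t| ≤ ηbar * β := by
      rw [abs_mul, abs_of_pos (hη0 t)]
      exact mul_le_mul (hηb t) (hp t) (abs_nonneg _) ((hη0 t).le.trans (hηb t))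
    rw [hstep]
    exact (abs_sub_le_max_of_mul_nonneg hmul).trans (max_le ih (hmove.trans (le_max_right _ _)))

end Drift

lemma mem_coneOf_of_sign_pairDiff {x w : Fin k → ℝ}
    (horth : ∀ j, Real.sign (pairDiff 0 1 j j x) = Real.sign (pairDiff 0 1 j j w))
    (hord : ∀ i j, Real.sign (pairDiff (SignType.sign (w i)) (SignType.sign (w j)) i j x) =
      Real.sign (pairDiff (SignType.sign (w i)) (SignType.sign (w j)) i j w)) :
    x ∈ ConeOf w := by
  have horth' : ∀ j, Real.sign (x j) = Real.sign (w j) := fun j => by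
    simpa [pairDiff_apply] using horth j
  have habs : ∀ j, (SignType.sign (w j) : ℝ) * x j = |x j| := fun j => by
    rw [← Real.sign_eq_coe_sign, ← horth' j, Real.sign_eq_coe_sign, sign_mul_self]
  refine ⟨horth', fun i j => ?_⟩
  simpa only [pairDiff_apply, habs, sign_mul_self] using hord i j

lemma sign_pairDiff_add_smul {u w : Fin k → ℝ}
    (hpos : ∀ a b i j, 0 < pairDiff a b i j w → 0 ≤ pairDiff a b i j u)
    (hzero : ∀ a b i j, pairDiff a b i j w = 0 → pairDiff a b i j u = 0) {τ : ℝ} (hτ : 0 < τ)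
    (a b : SignType) (i j : Fin k) :
    Real.sign (pairDiff a b i j (u + τ • w)) = Real.sign (pairDiff a b i j w) := by
  rw [map_add, map_smul, smul_eq_mul]
  rcases lt_trichotomy (pairDiff a b i j w) 0 with h | h | h
  · have := hpos (-a) (-b) i j (by rw [pairDiff_neg_neg]; linarith)
    rw [pairDiff_neg_neg] at this
    rw [Real.sign_of_neg (by nlinarith), Real.sign_of_neg h]
  · rw [h, hzero a b i j h, mul_zero, add_zero]
  · rw [Real.sign_of_pos (by nlinarith [hpos a b i j h]), Real.sign_of_pos h]

lemma tendsto_pairDiff_div_euclNorm {x : ℕ → Fin k → ℝ} {u : Fin k → ℝ}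
    (hu : Tendsto (fun m => fun i => x m i / euclNorm (x m)) atTop (𝓝 u)) (a b : SignType)
    (i j : Fin k) :
    Tendsto (fun m => pairDiff a b i j (x m) / euclNorm (x m)) atTop (𝓝 (pairDiff a b i j u)) := by
  refine (((pairDiff a b i j).continuous_of_finiteDimensional.tendsto u).comp hu).congr
    fun m => ?_
  simp [pairDiff_apply]
  ring

-- The step size `η t` plays the role of `η_t · c` in the QUANT update.
structure IsTernaryQuant (wstar : Fin k → ℝ) (η : ℕ → ℝ) (ηbar : ℝ) (y w : ℕ → Fin k → ℝ) :
    Prop where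
  proj : ∀ t, IsNTernProj (y t) (w t)
  step : ∀ t, y (t + 1) = y t + η t • (wstar - w t)
  pos : ∀ t, 0 < η t
  le_bound : ∀ t, η t ≤ ηbar
  tendsto_sum : Tendsto (fun T => ∑ t ∈ Finset.range T, η t) atTop atTop

namespace IsTernaryQuant

variable {wstar : Fin k → ℝ} {η : ℕ → ℝ} {ηbar : ℝ} {y w : ℕ → Fin k → ℝ}

lemma pairDiff_succ (h : IsTernaryQuant wstar η ηbar y w) (a b : SignType) (i j : Fin k)
    (t : ℕ) : pairDiff a b i j (y (t + 1)) =
      pairDiff a b i j (y t) + η t * (pairDiff a b i j wstar - pairDiff a b i j (w t)) := by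
  rw [h.step, map_add, map_smul, map_sub, smul_eq_mul]

lemma tendsto_dotProduct_wstar (h : IsTernaryQuant wstar η ηbar y w)
    (hw : euclNorm wstar = 1) (hQ : ¬ InQ3 wstar) :
    Tendsto (fun t => y t ⬝ᵥ wstar) atTop atTop := by
  obtain ⟨γ, hγ, hcorr⟩ := exists_pos_dotProduct_le_of_not_inQ3 hw hQ
  have hww : wstar ⬝ᵥ wstar = 1 := by
    rw [← Real.sqrt_eq_one, ← hw, euclNorm]
    simp [dotProduct, sq]
  have hgrow : ∀ t, y 0 ⬝ᵥ wstar + γ * ∑ r ∈ Finset.range t, η r ≤ y t ⬝ᵥ wstar := by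
    intro t
    induction t with
    | zero => simp
    | succ t ih =>
      rw [h.step, add_dotProduct, smul_dotProduct, sub_dotProduct, hww, smul_eq_mul,
        Finset.sum_range_succ, dotProduct_comm (w t)]
      nlinarith [hcorr _ _ (h.proj t), h.pos t]
  exact tendsto_atTop_mono hgrow
    (tendsto_atTop_add_const_left _ _ (h.tendsto_sum.const_mul_atTop hγ))

lemma tendsto_euclNorm (h : IsTernaryQuant wstar η ηbar y w) (hw : euclNorm wstar = 1)
    (hQ : ¬ InQ3 wstar) : Tendsto (fun t => euclNorm (y t)) atTop atTop :=
  tendsto_atTop_mono (fun t => (dotProduct_le_euclNorm_mul _ _).trans_eq (by rw [hw, mul_one]))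
    (h.tendsto_dotProduct_wstar hw hQ)

lemma tendsto_dotProduct_proj (h : IsTernaryQuant wstar η ηbar y w) (hw : euclNorm wstar = 1)
    (hQ : ¬ InQ3 wstar) : Tendsto (fun t => y t ⬝ᵥ w t) atTop atTop := by
  have hk : (0 : ℝ) < k := by
    rcases Nat.eq_zero_or_pos k with rfl | hk
    · simp [euclNorm] at hw
    · exact_mod_cast hk
  have hbound : ∀ t, y t ⬝ᵥ wstar ≤ k * (y t ⬝ᵥ w t) := fun t => by
    calc y t ⬝ᵥ wstar ≤ ∑ _l : Fin k, y t ⬝ᵥ w t := Finset.sum_le_sum fun l _ => by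
          calc y t l * wstar l ≤ |y t l| * |wstar l| := (le_abs_self _).trans (abs_mul _ _).le
            _ ≤ y t ⬝ᵥ w t * 1 := mul_le_mul ((h.proj t).abs_le_dotProduct l)
                  ((abs_le_euclNorm wstar l).trans_eq hw) (abs_nonneg _)
                  (h.proj t).dotProduct_nonneg
            _ = y t ⬝ᵥ w t := mul_one _
      _ = k * (y t ⬝ᵥ w t) := by simp
  refine tendsto_atTop_mono (fun t => ?_) ((h.tendsto_dotProduct_wstar hw hQ).atTop_div_const hk)
  rw [div_le_iff₀' hk]
  exact hbound t

lemma tendsto_pairDiff (h : IsTernaryQuant wstar η ηbar y w) (hw : euclNorm wstar = 1)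
    (hQ : ¬ InQ3 wstar) {a b : SignType} {i j : Fin k} (hΔ : 0 < pairDiff a b i j wstar) :
    Tendsto (fun t => pairDiff a b i j (y t)) atTop atTop := by
  obtain ⟨ε, hε0, hε⟩ := exists_pos_le_sqrt_gap k
  exact tendsto_atTop_of_drift hΔ zero_le_two h.pos h.le_bound h.tendsto_sum
    ((h.tendsto_dotProduct_proj hw hQ).const_mul_atTop hε0) (h.pairDiff_succ a b i j)
    (fun t => (le_abs_self _).trans (abs_pairDiff_le (h.proj t).abs_le_one a b i j))
    (fun t hp => (h.proj t).mul_le_pairDiff hε hp)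

lemma exists_abs_pairDiff_le (h : IsTernaryQuant wstar η ηbar y w) {a b : SignType}
    {i j : Fin k} (hΔ : pairDiff a b i j wstar = 0) :
    ∃ B, ∀ t, |pairDiff a b i j (y t)| ≤ B := by
  obtain ⟨ε, hε0, hε⟩ := exists_pos_le_sqrt_gap k
  refine ⟨_, abs_le_max_of_restoring h.pos h.le_bound
    (fun t => by rw [h.pairDiff_succ, hΔ]; ring)
    (fun t => abs_pairDiff_le (h.proj t).abs_le_one a b i j) (fun t => ?_)⟩
  have hG := mul_nonneg hε0.le (h.proj t).dotProduct_nonneg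
  rcases lt_trichotomy (pairDiff a b i j (w t)) 0 with hp | hp | hp
  · have := (h.proj t).mul_le_pairDiff hε (a := -a) (b := -b) (by rw [pairDiff_neg_neg]; linarith)
    rw [pairDiff_neg_neg] at this
    nlinarith
  · simp [hp]
  · have := (h.proj t).mul_le_pairDiff hε hp
    nlinarith

lemma eventually_sign_pairDiff (h : IsTernaryQuant wstar η ηbar y w) (hw : euclNorm wstar = 1)
    (hQ : ¬ InQ3 wstar) {a b : SignType} {i j : Fin k} (hΔ : pairDiff a b i j wstar ≠ 0) :
    ∀ᶠ t in atTop, Real.sign (pairDiff a b i j (y t)) = Real.sign (pairDiff a b i j wstar) := by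
  rcases hΔ.lt_or_gt with hneg | hpos
  · have hneg' : 0 < pairDiff (-a) (-b) i j wstar := by rw [pairDiff_neg_neg]; linarith
    filter_upwards [(h.tendsto_pairDiff hw hQ hneg').eventually_gt_atTop 0] with t ht
    rw [pairDiff_neg_neg] at ht
    rw [Real.sign_of_neg (by linarith), Real.sign_of_neg hneg]
  · filter_upwards [(h.tendsto_pairDiff hw hQ hpos).eventually_gt_atTop 0] with t ht
    rw [Real.sign_of_pos ht, Real.sign_of_pos hpos]

lemma pairDiff_nonneg_of_tendsto (h : IsTernaryQuant wstar η ηbar y w)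
    (hw : euclNorm wstar = 1) (hQ : ¬ InQ3 wstar) {tk : ℕ → ℕ} (htk : StrictMono tk)
    {u : Fin k → ℝ} (hu : Tendsto (fun m => fun i => y (tk m) i / euclNorm (y (tk m))) atTop (𝓝 u))
    {a b : SignType} {i j : Fin k} (hΔ : 0 < pairDiff a b i j wstar) :
    0 ≤ pairDiff a b i j u := by
  refine ge_of_tendsto (tendsto_pairDiff_div_euclNorm hu a b i j) ?_
  filter_upwards [htk.tendsto_atTop.eventually
    ((h.tendsto_pairDiff hw hQ hΔ).eventually_ge_atTop 0)] with m hm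
  exact div_nonneg hm (euclNorm_nonneg _)

lemma pairDiff_eq_zero_of_tendsto (h : IsTernaryQuant wstar η ηbar y w)
    (hw : euclNorm wstar = 1) (hQ : ¬ InQ3 wstar) {tk : ℕ → ℕ} (htk : StrictMono tk)
    {u : Fin k → ℝ} (hu : Tendsto (fun m => fun i => y (tk m) i / euclNorm (y (tk m))) atTop (𝓝 u))
    {a b : SignType} {i j : Fin k} (hΔ : pairDiff a b i j wstar = 0) :
    pairDiff a b i j u = 0 := by
  refine tendsto_nhds_unique (tendsto_pairDiff_div_euclNorm hu a b i j) ?_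
  obtain ⟨B, hB⟩ := h.exists_abs_pairDiff_le hΔ
  have hr := (h.tendsto_euclNorm hw hQ).comp htk.tendsto_atTop
  refine squeeze_zero_norm (fun m => ?_) ((tendsto_const_nhds (x := B)).div_atTop hr)
  rw [Real.norm_eq_abs, abs_div, abs_of_nonneg (euclNorm_nonneg _)]
  exact div_le_div_of_nonneg_right (hB _) (euclNorm_nonneg _)

lemma mem_closure_coneOf (h : IsTernaryQuant wstar η ηbar y w) (hw : euclNorm wstar = 1)
    (hQ : ¬ InQ3 wstar) {tk : ℕ → ℕ} (htk : StrictMono tk) {u : Fin k → ℝ}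
    (hu : Tendsto (fun m => fun i => y (tk m) i / euclNorm (y (tk m))) atTop (𝓝 u)) :
    u ∈ closure (ConeOf wstar) := by
  have hmem : ∀ τ : ℝ, 0 < τ → u + τ • wstar ∈ ConeOf wstar := fun τ hτ =>
    have hsign := sign_pairDiff_add_smul (fun _ _ _ _ => h.pairDiff_nonneg_of_tendsto hw hQ htk hu)
      (fun _ _ _ _ => h.pairDiff_eq_zero_of_tendsto hw hQ htk hu) hτ
    mem_coneOf_of_sign_pairDiff (fun j => hsign 0 1 j j) (fun i j => hsign _ _ i j)
  have hto : Tendsto (fun τ : ℝ => u + τ • wstar) (𝓝[>] 0) (𝓝 u) := by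
    have : Continuous fun τ : ℝ => u + τ • wstar := by fun_prop
    simpa using (this.tendsto 0).mono_left nhdsWithin_le_nhds
  exact mem_closure_of_tendsto hto (eventually_nhdsWithin_of_forall hmem)

lemma finite_setOf_not_mem_coneOf (h : IsTernaryQuant wstar η ηbar y w)
    (hw : euclNorm wstar = 1) (hQ : ¬ InQ3 wstar) (hnz : ∀ i, wstar i ≠ 0)
    (hdist : ∀ i j, i ≠ j → |wstar i| ≠ |wstar j|) : {t | y t ∉ ConeOf wstar}.Finite := by
  have horth := eventually_all.2 fun j => h.eventually_sign_pairDiff hw hQ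
    (a := 0) (b := 1) (i := j) (j := j) (by simpa [pairDiff_apply] using hnz j)
  have hord : ∀ i j, ∀ᶠ t in atTop,
      Real.sign (pairDiff (SignType.sign (wstar i)) (SignType.sign (wstar j)) i j (y t)) =
        Real.sign (pairDiff (SignType.sign (wstar i)) (SignType.sign (wstar j)) i j wstar) := by
    intro i j
    rcases eq_or_ne i j with rfl | hij
    · exact Eventually.of_forall fun t => by simp [pairDiff_apply]
    · exact h.eventually_sign_pairDiff hw hQ (by
        simpa [pairDiff_apply, sign_mul_self, sub_eq_zero] using (hdist i j hij).symm)
  have hev : ∀ᶠ t in atTop, y t ∈ ConeOf wstar := by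
    filter_upwards [horth, eventually_all.2 fun i => eventually_all.2 (hord i)] with t h1 h2
    exact mem_coneOf_of_sign_pairDiff h1 h2
  exact eventually_cofinite.1 (Nat.cofinite_eq_atTop ▸ hev)

end IsTernaryQuant

end

theorem stmt12_general (n m : ℕ)
    (wstar : Fin n → ℝ) (hws : euclNorm wstar = 1) (hQ : ¬ InQ3 wstar)
    (v : Fin m → ℝ) (hv : v ≠ 0)
    (c : ℝ) (hc : c = euclNorm v ^ 2 / (2 * Real.sqrt (2 * π)))
    (η : ℕ → ℝ) (ηbar : ℝ) (hη0 : ∀ t, 0 < η t) (hηb : ∀ t, η t ≤ ηbar)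
    (hηsum : Tendsto (fun T => ∑ t ∈ Finset.range T, η t) atTop atTop)
    (y w : ℕ → Fin n → ℝ)
    (hproj : ∀ t, IsNTernProj (y t) (w t))
    (hy : ∀ t i, y (t + 1) i = y t i + η t * c * (wstar i - w t i)) :
    (∀ tk : ℕ → ℕ, StrictMono tk → (∀ k, y (tk k) ≠ 0) →
      ∀ u : Fin n → ℝ,
        Tendsto (fun k => fun i => y (tk k) i / euclNorm (y (tk k))) atTop (nhds u) →
        u ∈ closure (ConeOf wstar)) ∧
    (((∀ i, wstar i ≠ 0) ∧ (∀ i j, i ≠ j → |wstar i| ≠ |wstar j|)) →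
      {t | y t ∉ ConeOf wstar}.Finite) := by
  have hc0 : 0 < c := by
    rw [hc]
    have := euclNorm_pos hv
    positivity
  have hquant : IsTernaryQuant wstar (fun t => η t * c) (ηbar * c) y w :=
    { proj := hproj
      step := fun t => funext fun i => by simp [hy]
      pos := fun t => mul_pos (hη0 t) hc0
      le_bound := fun t => mul_le_mul_of_nonneg_right (hηb t) hc0.le
      tendsto_sum := by simpa [Finset.sum_mul] using hηsum.atTop_mul_const hc0 }
  exact ⟨fun tk htk _ u hu => hquant.mem_closure_coneOf hws hQ htk hu,
    fun ⟨hnz, hdist⟩ => hquant.finite_setOf_not_mem_coneOf hws hQ hnz hdist⟩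

/-- Ternary QUANT iteration with `w* ∉ Q₃`: (i) any subsequential limit of the
normalized auxiliary iterates lies in the closure of `Cone(w*)`;
(ii) if `Cone(w*)` is regular (all coordinates of `w*` nonzero with pairwise distinct
absolute values), then `y^t ∈ Cone(w*)` for all but finitely many `t`. -/
theorem stmt12 (n m : ℕ) (hn : 1 ≤ n)
    (wstar : Fin n → ℝ) (hws : euclNorm wstar = 1) (hQ : ¬ InQ3 wstar)
    (v : Fin m → ℝ) (hv : v ≠ 0)
    (c : ℝ) (hc : c = euclNorm v ^ 2 / (2 * Real.sqrt (2 * π)))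
    (η : ℕ → ℝ) (ηbar : ℝ) (hη0 : ∀ t, 0 < η t) (hηb : ∀ t, η t ≤ ηbar)
    (hηsum : Tendsto (fun T => ∑ t ∈ Finset.range T, η t) atTop atTop)
    (y w : ℕ → Fin n → ℝ)
    (hproj : ∀ t, IsNTernProj (y t) (w t))
    (hy : ∀ t i, y (t + 1) i = y t i + η t * c * (wstar i - w t i)) :
    (∀ tk : ℕ → ℕ, StrictMono tk → (∀ k, y (tk k) ≠ 0) →
      ∀ u : Fin n → ℝ,
        Tendsto (fun k => fun i => y (tk k) i / euclNorm (y (tk k))) atTop (nhds u) →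
        u ∈ closure (ConeOf wstar)) ∧
    (((∀ i, wstar i ≠ 0) ∧ (∀ i j, i ≠ j → |wstar i| ≠ |wstar j|)) →
      {t | y t ∉ ConeOf wstar}.Finite) :=
  stmt12_general n m wstar hws hQ v hv c hc η ηbar hη0 hηb hηsum y w hproj hy
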